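/- arXiv:1706.00863 — 2 statements merged into one kernel-verified Lean document; each statement's English description precedes it below -/
import Mathlib

section
/- Let p be an odd prime, k > 0, n = 2p^k, and let G = C_n(S) be a circulant graph. If the number f_{p^k - 1} of cliques of G of cardinality p^k is nonzero, then f_{p^k - 1} ≡ 2 (mod p). -/
/-- Circular distance on `ZMod n`. -/
def circDist (n : ℕ) (a b : ZMod n) : ℕ := min (a - b).val (b - a).val

/-- The circulant graph `C_n(S)`. -/
def circGraph (n : ℕ) (S : Set ℕ) : SimpleGraph (ZMod n) where
  Adj a b := a ≠ b ∧ circDist n a b ∈ S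
  symm := by
    constructor
    intro a b h
    exact ⟨h.1.symm, by simpa [circDist, min_comm] using h.2⟩
  loopless := by constructor; intro a h; exact h.1 rfl

/-- `A` is an independent set of `C_n(S)`. -/
def IsIndepSet' (n : ℕ) (S : Set ℕ) (A : Finset (ZMod n)) : Prop :=
  ∀ a ∈ A, ∀ b ∈ A, ¬ (circGraph n S).Adj a b

/-- `A` is a clique of `C_n(S)`. -/
def IsClique' (n : ℕ) (S : Set ℕ) (A : Finset (ZMod n)) : Prop :=
  ∀ a ∈ A, ∀ b ∈ A, a ≠ b → (circGraph n S).Adj a b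

/-- The number of independent sets of cardinality `i` (this is `f_{i-1}`). -/
noncomputable def indepCount (n : ℕ) (S : Set ℕ) (i : ℕ) : ℕ :=
  Nat.card {A : Finset (ZMod n) // A.card = i ∧ IsIndepSet' n S A}

/-- The number of cliques of cardinality `i`. -/
noncomputable def cliqueCount (n : ℕ) (S : Set ℕ) (i : ℕ) : ℕ :=
  Nat.card {A : Finset (ZMod n) // A.card = i ∧ IsClique' n S A}

/-- The reduced Euler characteristic of the independence complex of `C_n(S)`. -/
noncomputable def redEuler (n : ℕ) (S : Set ℕ) : ℤ :=
  ∑ i ∈ Finset.range (n + 1), (-1) ^ (i + 1) * (indepCount n S i : ℤ)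

/-!
The even residues form a subgroup of `ZMod (2 * p ^ k)` of order `p ^ k`, which acts by
translation on the cliques of size `p ^ k`; so their number is congruent mod `p` to the number of
fixed cliques. A fixed set of size `p ^ k` is a coset of the even subgroup, i.e. one of the two
parity classes. Both are cliques once some clique `A` of size `p ^ k` exists, because then `S`
contains every even distance `0 < d ≤ p ^ k`: otherwise `A ∩ (d + A) = ∅`, so `d + A = Aᶜ` and
translating by any odd multiple of `d` swaps `A` and `Aᶜ`; but `p ^ k • d = 0` as `d` is even.
-/

open Finset Pointwise

section CirculantGraph

variable {N : ℕ}

lemma circDist_add_left (c a b : ZMod N) : circDist N (c + a) (c + b) = circDist N a b := by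
  simp only [circDist, add_sub_add_left_eq_sub]

lemma circDist_self_add [NeZero N] (a : ZMod N) {d : ℕ} (hd : 2 * d ≤ N) :
    circDist N a (d + a) = d := by
  have hdN : d < N := by have := NeZero.pos N; omega
  have hval : (d : ZMod N).val = d := ZMod.val_cast_of_lt hdN
  unfold circDist
  rw [show a - (d + a) = -(d : ZMod N) by abel, add_sub_cancel_right, ZMod.neg_val, hval]
  split_ifs with hd0
  · rw [hd0, ZMod.val_zero] at hval
    omega
  · omega

lemma circDist_pos {a b : ZMod N} (hab : a ≠ b) : 0 < circDist N a b :=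
  lt_min (ZMod.val_pos.mpr (sub_ne_zero.mpr hab)) (ZMod.val_pos.mpr (sub_ne_zero.mpr hab.symm))

lemma two_mul_circDist_le [NeZero N] (a b : ZMod N) : 2 * circDist N a b ≤ N := by
  unfold circDist
  rw [← neg_sub, ZMod.neg_val]
  split_ifs <;> omega

lemma IsClique'.vadd {S : Set ℕ} {A : Finset (ZMod N)} (hA : IsClique' N S A) (c : ZMod N) :
    IsClique' N S (c +ᵥ A) := by
  intro _ ha' _ hb' hne
  obtain ⟨a, ha, rfl⟩ := mem_vadd_finset.mp ha'
  obtain ⟨b, hb, rfl⟩ := mem_vadd_finset.mp hb'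
  have hab : a ≠ b := by rintro rfl; exact hne rfl
  exact ⟨hne, (circDist_add_left c a b).symm ▸ (hA a ha b hb hab).2⟩

def cliqueSubAction (N : ℕ) (S : Set ℕ) (i : ℕ) : SubAddAction (ZMod N) (Finset (ZMod N)) where
  carrier := {A | A.card = i ∧ IsClique' N S A}
  vadd_mem' c _ hA := ⟨(card_vadd_finset c _).trans hA.1, hA.2.vadd c⟩

lemma card_cliqueSubAction (S : Set ℕ) (i : ℕ) :
    Nat.card (cliqueSubAction N S i) = cliqueCount N S i := rfl

end CirculantGraph

lemma exists_add_mem_of_card_eq_half {α : Type*} [AddGroup α] [Fintype α] [DecidableEq α]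
    {m : ℕ} (hm : Odd m) (hα : Fintype.card α = 2 * m) {A : Finset α} (hA : A.card = m)
    {d : α} (hd : m • d = 0) : ∃ a ∈ A, d + a ∈ A := by
  by_contra! hdisj
  have htrans : d +ᵥ A = Aᶜ := by
    refine eq_of_subset_of_card_le ?_ ?_
    · intro _ hx
      obtain ⟨a, ha, rfl⟩ := mem_vadd_finset.mp hx
      exact mem_compl.mpr (hdisj a ha)
    · rw [card_compl, card_vadd_finset, hα, hA]
      omega
  have hflip (x : α) : d + x ∈ A ↔ x ∉ A := by
    rw [← not_iff_not, not_not, ← mem_compl, ← htrans, ← vadd_eq_add, vadd_mem_vadd_finset_iff]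
  have heven (j : ℕ) (x : α) : (2 * j) • d + x ∈ A ↔ x ∈ A := by
    induction j with
    | zero => rw [mul_zero, zero_nsmul, zero_add]
    | succ j ih =>
      rw [mul_add, mul_one, succ_nsmul', succ_nsmul', add_assoc, add_assoc, hflip, hflip,
        not_not, ih]
  obtain ⟨j, rfl⟩ := hm
  have h0 := hflip ((2 * j) • d + 0)
  rw [heven, ← add_assoc, ← succ_nsmul', hd, zero_add] at h0
  exact iff_not_self h0

section Parity

variable {m : ℕ}

def parity (m : ℕ) : ZMod (2 * m) →+* ZMod 2 := ZMod.castHom (dvd_mul_right 2 m) (ZMod 2)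

def parityClass (m : ℕ) [NeZero m] (i : ZMod 2) : Finset (ZMod (2 * m)) := {x | parity m x = i}

def evenSubgroup (m : ℕ) : AddSubgroup (ZMod (2 * m)) := (parity m).toAddMonoidHom.ker

lemma mem_evenSubgroup {x : ZMod (2 * m)} : x ∈ evenSubgroup m ↔ parity m x = 0 := Iff.rfl

variable [NeZero m]

lemma mem_parityClass {i : ZMod 2} {x : ZMod (2 * m)} : x ∈ parityClass m i ↔ parity m x = i := by
  simp [parityClass]

lemma parity_eq_zero_iff_even_val (x : ZMod (2 * m)) : parity m x = 0 ↔ Even x.val := by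
  rw [parity, ZMod.castHom_apply, ← ZMod.natCast_val, ZMod.natCast_eq_zero_iff_even]

lemma card_parityClass (i : ZMod 2) : (parityClass m i).card = m := by
  have hfiber (j : ZMod 2) : (parityClass m j).card = (parityClass m 0).card :=
    AddMonoidHom.card_fiber_eq_of_mem_range (parity m).toAddMonoidHom
      (ZMod.ringHom_surjective (parity m) j) (ZMod.ringHom_surjective (parity m) 0)
  have htotal : (univ : Finset (ZMod (2 * m))).card = ∑ j, (parityClass m j).card :=
    card_eq_sum_card_fiberwise (fun x _ => mem_univ (parity m x))
  rw [card_univ, ZMod.card] at htotal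
  simp only [hfiber, sum_const, card_univ, ZMod.card, smul_eq_mul] at htotal
  rw [hfiber]
  omega

lemma card_evenSubgroup : Nat.card (evenSubgroup m) = m := by
  calc Nat.card (evenSubgroup m) = Nat.card (parityClass m 0) :=
        Nat.card_congr (Equiv.subtypeEquivRight fun _ => mem_parityClass.symm)
    _ = m := by rw [Nat.card_eq_finsetCard, card_parityClass]

lemma even_circDist {a b : ZMod (2 * m)} (h : parity m a = parity m b) :
    Even (circDist (2 * m) a b) := by
  have hab : Even (a - b).val := (parity_eq_zero_iff_even_val _).mp (by rw [map_sub, h, sub_self])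
  have hba : Even (b - a).val := (parity_eq_zero_iff_even_val _).mp (by rw [map_sub, h, sub_self])
  rcases min_choice (a - b).val (b - a).val with hmin | hmin <;>
    simpa only [circDist, hmin]

lemma parityClass_isClique {S : Set ℕ} (hS : ∀ d, Even d → 0 < d → d ≤ m → d ∈ S)
    (i : ZMod 2) : IsClique' (2 * m) S (parityClass m i) := by
  intro a ha b hb hab
  rw [mem_parityClass] at ha hb
  have hle := two_mul_circDist_le a b
  exact ⟨hab, hS _ (even_circDist (ha.trans hb.symm)) (circDist_pos hab) (by omega)⟩

lemma vadd_parityClass {h : ZMod (2 * m)} (hh : h ∈ evenSubgroup m) (i : ZMod 2) :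
    h +ᵥ parityClass m i = parityClass m i := by
  refine eq_of_subset_of_card_le (fun _ hx => ?_) (card_vadd_finset h _).ge
  obtain ⟨y, hy, rfl⟩ := mem_vadd_finset.mp hx
  rw [mem_parityClass] at hy ⊢
  rw [vadd_eq_add, map_add, mem_evenSubgroup.mp hh, hy, zero_add]

lemma eq_parityClass_of_forall_vadd_eq {A : Finset (ZMod (2 * m))} (hA : A.card = m)
    {a : ZMod (2 * m)} (ha : a ∈ A) (hfix : ∀ h ∈ evenSubgroup m, h +ᵥ A = A) :
    A = parityClass m (parity m a) := by
  refine (eq_of_subset_of_card_le (fun y hy => ?_) (by rw [hA, card_parityClass])).symm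
  have hya : y - a ∈ evenSubgroup m := by
    rw [mem_evenSubgroup, map_sub, mem_parityClass.mp hy, sub_self]
  have hmem := vadd_mem_vadd_finset (a := y - a) ha
  rwa [hfix _ hya, vadd_eq_add, sub_add_cancel] at hmem

lemma even_mem_of_isClique (hm : Odd m) {S : Set ℕ} {A : Finset (ZMod (2 * m))}
    (hA : IsClique' (2 * m) S A) (hcard : A.card = m) {d : ℕ} (hd : Even d) (hd0 : 0 < d)
    (hdm : d ≤ m) : d ∈ S := by
  have hmd : m • (d : ZMod (2 * m)) = 0 := by
    obtain ⟨e, rfl⟩ := hd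
    rw [nsmul_eq_mul, ← Nat.cast_mul, ZMod.natCast_eq_zero_iff]
    exact ⟨e, by ring⟩
  have hd_ne : (d : ZMod (2 * m)) ≠ 0 := by
    rw [Ne, ZMod.natCast_eq_zero_iff]
    exact fun hdvd => absurd (Nat.le_of_dvd hd0 hdvd) (by omega)
  obtain ⟨a, ha, hda⟩ := exists_add_mem_of_card_eq_half hm (ZMod.card _) hcard hmd
  have hne : a ≠ d + a := fun h => hd_ne (by simpa using h.symm)
  simpa only [circDist_self_add a (by omega : 2 * d ≤ 2 * m)] using (hA a ha _ hda hne).2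

end Parity

lemma card_modEq_card_fixedPoints_of_card_eq_prime_pow {G α : Type*} [AddGroup G]
    [AddAction G α] [Finite α] {p k : ℕ} [Fact p.Prime] (hG : Nat.card G = p ^ k) :
    Nat.card α ≡ Nat.card (AddAction.fixedPoints G α) [MOD p] :=
  (IsPGroup.of_card (G := Multiplicative G) hG).card_modEq_card_fixedPoints α

lemma card_fixedPoints_cliqueSubAction {m : ℕ} [NeZero m] {S : Set ℕ}
    (hS : ∀ d, Even d → 0 < d → d ≤ m → d ∈ S) :
    Nat.card (AddAction.fixedPoints (evenSubgroup m) (cliqueSubAction (2 * m) S m)) = 2 := by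
  let parityClique (i : ZMod 2) : cliqueSubAction (2 * m) S m :=
    ⟨parityClass m i, card_parityClass i, parityClass_isClique hS i⟩
  have hinj : Function.Injective parityClique := by
    intro i j hij
    obtain ⟨x, hx⟩ := card_pos.mp ((card_parityClass (m := m) i).symm ▸ NeZero.pos m)
    have hij' : parityClass m i = parityClass m j := congrArg Subtype.val hij
    have hx' : x ∈ parityClass m j := hij' ▸ hx
    exact (mem_parityClass.mp hx).symm.trans (mem_parityClass.mp hx')
  have hrange : AddAction.fixedPoints (evenSubgroup m) (cliqueSubAction (2 * m) S m) =
      Set.range parityClique := by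
    ext A
    rw [AddAction.mem_fixedPoints]
    constructor
    · intro hfix
      obtain ⟨a, ha⟩ := card_pos.mp (A.2.1.symm ▸ NeZero.pos m)
      refine ⟨parity m a, Subtype.ext ?_⟩
      exact (eq_parityClass_of_forall_vadd_eq A.2.1 ha
        fun h hh => congrArg Subtype.val (hfix ⟨h, hh⟩)).symm
    · rintro ⟨i, rfl⟩ ⟨h, hh⟩
      exact Subtype.ext (vadd_parityClass hh i)
  rw [hrange, Nat.card_range_of_injective hinj, Nat.card_zmod]

theorem stmt10_general (p k n : ℕ) (hp : p.Prime) (hodd : Odd p)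
    (hn : n = 2 * p ^ k) (S : Set ℕ)
    (h : cliqueCount n S (p ^ k) ≠ 0) :
    cliqueCount n S (p ^ k) ≡ 2 [MOD p] := by
  subst hn
  have : Fact p.Prime := ⟨hp⟩
  have : NeZero (p ^ k) := ⟨pow_ne_zero k hp.ne_zero⟩
  obtain ⟨A, hcard, hA⟩ := (Nat.card_ne_zero.mp h).1.some
  have hS : ∀ d, Even d → 0 < d → d ≤ p ^ k → d ∈ S := fun _ =>
    even_mem_of_isClique hodd.pow hA hcard
  have hcong := card_modEq_card_fixedPoints_of_card_eq_prime_pow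
    (α := cliqueSubAction (2 * p ^ k) S (p ^ k)) (card_evenSubgroup (m := p ^ k))
  rwa [card_cliqueSubAction, card_fixedPoints_cliqueSubAction hS] at hcong

theorem stmt10 (p k n : ℕ) (hp : p.Prime) (hodd : Odd p) (hk : 0 < k)
    (hn : n = 2 * p ^ k) (S : Set ℕ) (hS : S ⊆ Set.Icc 1 (p ^ k))
    (h : cliqueCount n S (p ^ k) ≠ 0) :
    cliqueCount n S (p ^ k) ≡ 2 [MOD p] :=
  stmt10_general p k n hp hodd hn S h
end

section
/- Let p be an odd prime, k > 0, n = 2p^k, and let G = C_n(S) be a circulant graph with 1 ∈ S such that there exists t with 1 ≤ t ≤ p^k, t odd, gcd(t, p) = 1, and t ∉ S, and such that G contains a clique of cardinality p^k. Then G has exactly two cliques of cardinality p^k (the even vertices and the odd vertices). -/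
/-!
Let `V` be a clique of size `n / 2` in `C_n(S)`, `n` even, and `t ∉ S` odd and coprime to `n`
with `t ≤ n / 2`. Then `V` never contains both `a` and `a + t`, so `V` and `V + t` are disjoint
halves of `ℤ/n` and `a + t ∈ V ↔ a ∉ V`. Walking along the multiples of `t`, which exhaust `ℤ/n`,
membership in `V` alternates with the parity of the multiplier, and since `t` is odd and `n` even
that parity is the parity of the vertex: `V` is the set of even or of odd vertices. Translating
the given clique by `t` produces a clique of the other parity, so both classes are cliques.
-/

open Finset

theorem add_nsmul_mem_iff {M : Type*} [AddMonoid M] {W : Finset M} {c : M}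
    (h : ∀ x, x + c ∈ W ↔ x ∉ W) (x : M) (j : ℕ) : x + j • c ∈ W ↔ (x ∈ W ↔ Even j) := by
  induction j with
  | zero => simp
  | succ j ih =>
    rw [succ_nsmul, ← add_assoc, h, ih, Nat.even_add_one]
    tauto

theorem add_mem_iff_notMem_of_card_eq_two_mul {G : Type*} [AddGroup G] [Fintype G]
    [DecidableEq G] {W : Finset G} {c : G} (hcard : Fintype.card G = 2 * #W)
    (hW : ∀ x ∈ W, x + c ∉ W) (x : G) : x + c ∈ W ↔ x ∉ W := by
  have hdisj : Disjoint W (W.map (Equiv.addRight c).toEmbedding) := by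
    rw [disjoint_right]
    intro y hy hyW
    exact hW (y - c) (by simpa [sub_eq_add_neg] using hy) (by simpa using hyW)
  have huniv : W ∪ W.map (Equiv.addRight c).toEmbedding = univ := by
    apply eq_univ_of_card
    rw [card_union_of_disjoint hdisj, card_map, hcard]
    ring
  constructor
  · exact fun hxc hx => hW x hx hxc
  · intro hx
    have := huniv ▸ mem_univ (x + c)
    simpa [hx] using this

namespace ZMod

theorem even_val_natCast {n : ℕ} (hn : 2 ∣ n) (x : ℕ) : Even (x : ZMod n).val ↔ Even x := by
  rw [val_natCast, Nat.even_iff, Nat.even_iff, Nat.mod_mod_of_dvd _ hn]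

theorem exists_nsmul_natCast_eq {n t : ℕ} [NeZero n] (h : t.Coprime n) (v : ZMod n) :
    ∃ j : ℕ, j • (t : ZMod n) = v := by
  refine ⟨(v * ↑(unitOfCoprime t h)⁻¹).val, ?_⟩
  rw [nsmul_eq_mul, natCast_zmod_val, ← coe_unitOfCoprime t h, Units.inv_mul_cancel_right]

end ZMod

section Circulant

variable {n : ℕ} {S : Set ℕ}

theorem circDist_add_right (a b c : ZMod n) : circDist n (a + c) (b + c) = circDist n a b := by
  simp only [circDist, add_sub_add_right_eq_sub]

theorem circDist_add_natCast_self [NeZero n] (a : ZMod n) {t : ℕ} (ht : 2 * t ≤ n) :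
    circDist n (a + t) a = t := by
  have htn : t < n := by have := NeZero.pos n; omega
  rw [circDist, add_sub_cancel_left, sub_add_cancel_left, ZMod.neg_val',
    ZMod.val_natCast_of_lt htn]
  rcases Nat.eq_zero_or_pos t with rfl | ht0
  · simp
  · rw [Nat.mod_eq_of_lt (by omega)]
    omega

theorem IsClique'.map_addRight {V : Finset (ZMod n)} (hV : IsClique' n S V) (c : ZMod n) :
    IsClique' n S (V.map (Equiv.addRight c).toEmbedding) := by
  intro x hx y hy hxy
  obtain ⟨a, ha, rfl⟩ := mem_map.mp hx
  obtain ⟨b, hb, rfl⟩ := mem_map.mp hy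
  have hab : a ≠ b := fun h => hxy (h ▸ rfl)
  refine ⟨hxy, ?_⟩
  simpa only [Equiv.coe_toEmbedding, Equiv.coe_addRight, circDist_add_right] using
    (hV a ha b hb hab).2

theorem IsClique'.add_natCast_notMem [NeZero n] {V : Finset (ZMod n)} (hV : IsClique' n S V)
    {t : ℕ} (ht0 : 0 < t) (h2t : 2 * t ≤ n) (htS : t ∉ S) {a : ZMod n} (ha : a ∈ V) :
    a + t ∉ V := by
  intro hat
  have hne : a + t ≠ a := by
    rw [Ne, add_eq_left, ← ZMod.val_eq_zero, ZMod.val_natCast_of_lt (by omega)]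
    omega
  exact htS (circDist_add_natCast_self a h2t ▸ (hV _ hat _ ha hne).2)

theorem IsClique'.add_natCast_mem_iff [NeZero n] {V : Finset (ZMod n)} (hV : IsClique' n S V)
    (hcard : n = 2 * #V) {t : ℕ} (ht0 : 0 < t) (h2t : 2 * t ≤ n) (htS : t ∉ S) (x : ZMod n) :
    x + t ∈ V ↔ x ∉ V :=
  add_mem_iff_notMem_of_card_eq_two_mul ((ZMod.card n).trans hcard)
    (fun _ ha => hV.add_natCast_notMem ht0 h2t htS ha) x

theorem IsClique'.mem_iff_even_val [NeZero n] {V : Finset (ZMod n)} (hV : IsClique' n S V)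
    (hcard : n = 2 * #V) {t : ℕ} (htodd : Odd t) (hcop : t.Coprime n) (h2t : 2 * t ≤ n)
    (htS : t ∉ S) (v : ZMod n) : v ∈ V ↔ (Even v.val ↔ 0 ∈ V) := by
  obtain ⟨j, rfl⟩ := ZMod.exists_nsmul_natCast_eq hcop v
  have halt := add_nsmul_mem_iff (hV.add_natCast_mem_iff hcard htodd.pos h2t htS) 0 j
  rw [zero_add] at halt
  rw [halt, nsmul_eq_mul, ← Nat.cast_mul, ZMod.even_val_natCast ⟨#V, hcard⟩, Nat.even_mul,
    or_iff_left (Nat.not_even_iff_odd.mpr htodd)]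
  tauto

end Circulant

theorem ZMod.even_or_odd_class_iff {n : ℕ} (V : Finset (ZMod n)) :
    ((∀ v : ZMod n, v ∈ V ↔ Even v.val) ∨ (∀ v : ZMod n, v ∈ V ↔ ¬ Even v.val)) ↔
      ∀ v : ZMod n, v ∈ V ↔ (Even v.val ↔ 0 ∈ V) := by
  constructor
  · rintro (h | h) v <;> simp [h]
  · intro h
    by_cases h0 : 0 ∈ V
    · exact Or.inl fun v => by simpa [h0] using h v
    · exact Or.inr fun v => by simpa [h0] using h v

theorem stmt12_general (p k n : ℕ)
    (hn : n = 2 * p ^ k) (S : Set ℕ)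
    (ht : ∃ t : ℕ, 1 ≤ t ∧ t ≤ p ^ k ∧ Odd t ∧ Nat.gcd t p = 1 ∧ t ∉ S)
    (hex : ∃ V : Finset (ZMod n), V.card = p ^ k ∧ IsClique' n S V) :
    ∀ V : Finset (ZMod n), (V.card = p ^ k ∧ IsClique' n S V) ↔
      ((∀ v : ZMod n, v ∈ V ↔ Even v.val) ∨ (∀ v : ZMod n, v ∈ V ↔ ¬ Even v.val)) := by
  obtain ⟨t, -, htm, htodd, htp, htS⟩ := ht
  obtain ⟨V₀, hV₀card, hV₀⟩ := hex
  subst hn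
  have : NeZero (2 * p ^ k) := ⟨by have := htodd.pos; omega⟩
  have hcop : t.Coprime (2 * p ^ k) :=
    htodd.coprime_two_right.mul_right (Nat.Coprime.pow_right k htp)
  have h2t : 2 * t ≤ 2 * p ^ k := by omega
  have hclass : ∀ V : Finset (ZMod (2 * p ^ k)), V.card = p ^ k → IsClique' _ S V →
      ∀ v, v ∈ V ↔ (Even v.val ↔ 0 ∈ V) :=
    fun V hcard hV => hV.mem_iff_even_val (by rw [hcard]) htodd hcop h2t htS
  set V₁ := V₀.map (Equiv.addRight (t : ZMod (2 * p ^ k))).toEmbedding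
  have hV₁ : V₁.card = p ^ k ∧ IsClique' _ S V₁ := ⟨by rw [card_map, hV₀card], hV₀.map_addRight _⟩
  have hV₁0 : 0 ∈ V₁ ↔ 0 ∉ V₀ := by
    rw [mem_map_equiv, ← neg_add_cancel (t : ZMod (2 * p ^ k)),
      hV₀.add_natCast_mem_iff (by rw [hV₀card]) htodd.pos h2t htS]
    simp
  intro V
  rw [ZMod.even_or_odd_class_iff]
  refine ⟨fun hV => hclass V hV.1 hV.2, fun hV => ?_⟩
  obtain ⟨W, hW, hW0⟩ : ∃ W, (W.card = p ^ k ∧ IsClique' _ S W) ∧ (0 ∈ W ↔ 0 ∈ V) := by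
    by_cases h : 0 ∈ V₀ ↔ 0 ∈ V
    · exact ⟨V₀, ⟨hV₀card, hV₀⟩, h⟩
    · exact ⟨V₁, hV₁, by tauto⟩
  rwa [show V = W by ext v; rw [hV v, hclass W hW.1 hW.2 v, hW0]]

theorem stmt12 (p k n : ℕ) (hp : p.Prime) (hodd : Odd p) (hk : 0 < k)
    (hn : n = 2 * p ^ k) (S : Set ℕ) (hS : S ⊆ Set.Icc 1 (p ^ k))
    (h1 : 1 ∈ S)
    (ht : ∃ t : ℕ, 1 ≤ t ∧ t ≤ p ^ k ∧ Odd t ∧ Nat.gcd t p = 1 ∧ t ∉ S)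
    (hex : ∃ V : Finset (ZMod n), V.card = p ^ k ∧ IsClique' n S V) :
    ∀ V : Finset (ZMod n), (V.card = p ^ k ∧ IsClique' n S V) ↔
      ((∀ v : ZMod n, v ∈ V ↔ Even v.val) ∨ (∀ v : ZMod n, v ∈ V ↔ ¬ Even v.val)) :=
  stmt12_general p k n hn S ht hex
end
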